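/- Let r ≥ 1 be an integer and let G be the graph 𝒢(1,r,r) on n = 2r + 3 vertices. Then q₁(G) > d₁(G) + 3/2 and q₂(G) > d₂(G) − 1/2, where q₁(G) ≥ q₂(G) are the two largest eigenvalues (with multiplicity) of the signless Laplacian Q(G) and d₁(G) ≥ d₂(G) are the two largest vertex degrees of G (here d₁(G) = d₂(G) = r + 2). -/

import Mathlib

open Matrix

/-- The signless Laplacian matrix `Q(G) = D + A` of a simple graph, over `ℝ`. -/
def sLapMatrix {m : ℕ} (G : SimpleGraph (Fin m)) [DecidableRel G.Adj] :
    Matrix (Fin m) (Fin m) ℝ :=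
  G.degMatrix ℝ + G.adjMatrix ℝ

/-- `q` lists the eigenvalues of `A` (with multiplicity) in non-increasing order. -/
def IsEigSeq {m : ℕ} (A : Matrix (Fin m) (Fin m) ℝ) (q : Fin m → ℝ) : Prop :=
  Antitone q ∧ ∃ (hA : A.IsHermitian) (σ : Equiv.Perm (Fin m)),
    ∀ i, q i = hA.eigenvalues (σ i)

/-- `d` lists the degrees of `G` (with multiplicity) in non-increasing order. -/
def IsDegSeq {m : ℕ} (G : SimpleGraph (Fin m)) [DecidableRel G.Adj] (d : Fin m → ℕ) : Prop :=
  Antitone d ∧ ∃ σ : Equiv.Perm (Fin m), ∀ i, d i = G.degree (σ i)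

/-- The graph `𝒢(p,r,s)` on `p + r + s + 2` vertices: the graph `ℋ(p,r,s)` plus the
edge `{u, v} = {0, 1}`. -/
def GGraph (p r s : ℕ) : SimpleGraph (Fin (p + r + s + 2)) where
  Adj a b :=
    ((a.val = 0 ∧ b.val = 1) ∨ (b.val = 0 ∧ a.val = 1)) ∨
    (((a.val = 0 ∧ 2 ≤ b.val ∧ b.val < p + r + 2) ∨
      (a.val = 1 ∧ 2 ≤ b.val ∧ (b.val < p + 2 ∨ p + r + 2 ≤ b.val))) ∨
     ((b.val = 0 ∧ 2 ≤ a.val ∧ a.val < p + r + 2) ∨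
      (b.val = 1 ∧ 2 ≤ a.val ∧ (a.val < p + 2 ∨ p + r + 2 ≤ a.val))))
  symm := by constructor; intro a b h; tauto
  loopless := by
    constructor
    intro a h
    rcases h with (⟨h1, h2⟩ | ⟨h1, h2⟩) |
      ((⟨h1, h2, _⟩ | ⟨h1, h2, _⟩) | (⟨h1, h2, _⟩ | ⟨h1, h2, _⟩)) <;> omega

instance GGraph.adjDecidable (p r s : ℕ) : DecidableRel (GGraph p r s).Adj := fun a b =>
  inferInstanceAs (Decidable
    (((a.val = 0 ∧ b.val = 1) ∨ (b.val = 0 ∧ a.val = 1)) ∨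
     (((a.val = 0 ∧ 2 ≤ b.val ∧ b.val < p + r + 2) ∨
       (a.val = 1 ∧ 2 ≤ b.val ∧ (b.val < p + 2 ∨ p + r + 2 ≤ b.val))) ∨
      ((b.val = 0 ∧ 2 ≤ a.val ∧ a.val < p + r + 2) ∨
       (b.val = 1 ∧ 2 ≤ a.val ∧ (a.val < p + 2 ∨ p + r + 2 ≤ a.val))))))

/-!
On vectors that are constant on each of the parts `{u}`, `{v}`, `P`, `R`, `S`, the signless
Laplacian of `𝒢(p,r,s)` acts by an explicit `5 × 5` matrix, so both bounds reduce to arithmetic.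
For `q₁`, the Rayleigh quotient of the test vector `(2r+1, 2r+1, 2, 1, 1)` already exceeds
`r + 7/2 = d₁ + 3/2`. For `q₂`, the vector `(μ-1, 1-μ, 0, 1, -1)` is an eigenvector whenever
`μ² = (r+2)μ - 1`; the larger root lies in `(r + 3/2, r + 2)` as soon as `r ≥ 1`, and being
smaller than `q₁` it is at most `q₂`. Every degree is at most `r + 2`.
-/

namespace Matrix.IsHermitian

variable {n : Type*} [Fintype n] [DecidableEq n] {A : Matrix n n ℝ}

open scoped MatrixOrder in
theorem dotProduct_mulVec_le_of_eigenvalues_le (hA : A.IsHermitian) {c : ℝ}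
    (hc : ∀ i, hA.eigenvalues i ≤ c) (x : n → ℝ) : x ⬝ᵥ (A *ᵥ x) ≤ c * (x ⬝ᵥ x) := by
  have hle : A ≤ algebraMap ℝ _ c := by
    refine le_algebraMap_of_spectrum_le (fun y hy => ?_) hA.isSelfAdjoint
    rw [hA.spectrum_real_eq_range_eigenvalues] at hy
    obtain ⟨i, rfl⟩ := hy
    exact hc i
  simpa [sub_mulVec, Algebra.algebraMap_eq_smul_one, smul_mulVec, dotProduct_smul] using
    (Matrix.le_iff.mp hle).dotProduct_mulVec_nonneg x

theorem mem_range_eigenvalues_of_mulVec_eq_smul (hA : A.IsHermitian) {μ : ℝ} {w : n → ℝ}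
    (hw : w ≠ 0) (h : A *ᵥ w = μ • w) : μ ∈ Set.range hA.eigenvalues := by
  rw [← hA.spectrum_real_eq_range_eigenvalues, ← Matrix.spectrum_toLin']
  exact Module.End.HasEigenvalue.mem_spectrum
    (Module.End.hasEigenvalue_of_hasEigenvector ⟨Module.End.mem_eigenspace_iff.mpr h, hw⟩)

end Matrix.IsHermitian

namespace IsEigSeq

variable {m : ℕ} {A : Matrix (Fin m) (Fin m) ℝ} {q : Fin m → ℝ}

theorem dotProduct_mulVec_le (hq : IsEigSeq A q) (hm : 0 < m) (x : Fin m → ℝ) :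
    x ⬝ᵥ (A *ᵥ x) ≤ q ⟨0, hm⟩ * (x ⬝ᵥ x) := by
  obtain ⟨hanti, hA, σ, hσ⟩ := hq
  refine hA.dotProduct_mulVec_le_of_eigenvalues_le (fun i => ?_) x
  rw [← σ.apply_symm_apply i, ← hσ]
  exact hanti (Fin.le_def.mpr (Nat.zero_le _))

theorem exists_eq_of_mulVec_eq_smul (hq : IsEigSeq A q) {μ : ℝ} {w : Fin m → ℝ} (hw : w ≠ 0)
    (h : A *ᵥ w = μ • w) : ∃ i, q i = μ := by
  obtain ⟨-, hA, σ, hσ⟩ := hq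
  obtain ⟨j, hj⟩ := hA.mem_range_eigenvalues_of_mulVec_eq_smul hw h
  exact ⟨σ.symm j, by rw [hσ, σ.apply_symm_apply, hj]⟩

theorem le_second_of_mulVec_eq_smul (hq : IsEigSeq A q) (hm : 1 < m) {μ : ℝ} {w : Fin m → ℝ}
    (hw : w ≠ 0) (h : A *ᵥ w = μ • w) (hμ : μ < q ⟨0, by omega⟩) : μ ≤ q ⟨1, hm⟩ := by
  obtain ⟨i, rfl⟩ := hq.exists_eq_of_mulVec_eq_smul hw h
  have hi : i ≠ ⟨0, by omega⟩ := by rintro rfl; exact lt_irrefl _ hμ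
  exact hq.1 (Fin.le_def.mpr (Nat.one_le_iff_ne_zero.mpr fun h0 => hi (Fin.ext h0)))

end IsEigSeq

theorem IsDegSeq.le_maxDegree {m : ℕ} {G : SimpleGraph (Fin m)} [DecidableRel G.Adj]
    {d : Fin m → ℕ} (hd : IsDegSeq G d) (i : Fin m) : d i ≤ G.maxDegree := by
  obtain ⟨-, σ, hσ⟩ := hd
  exact hσ i ▸ G.degree_le_maxDegree (σ i)

theorem exists_sq_eq_mul_sub_one_mem_Ioo {t : ℝ} (ht : 1 / 2 < t) :
    ∃ μ ∈ Set.Ioo (t + 3 / 2) (t + 2), μ ^ 2 = (t + 2) * μ - 1 := by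
  have ht₀ : 0 ≤ t ^ 2 + 4 * t := by nlinarith
  have hsq := Real.sq_sqrt ht₀
  have hlo : t + 1 < √(t ^ 2 + 4 * t) := (Real.lt_sqrt (by linarith)).mpr (by nlinarith)
  have hhi : √(t ^ 2 + 4 * t) < t + 2 := (Real.sqrt_lt' (by linarith)).mpr (by nlinarith)
  exact ⟨(t + 2 + √(t ^ 2 + 4 * t)) / 2, ⟨by linarith, by linarith⟩,
    by linear_combination hsq / 4⟩

namespace GGraph

variable {M : Type*} [AddCommMonoid M] {p r s : ℕ}

theorem sum_eq_of_const_on_parts (f : Fin (p + r + s + 2) → M) (c x y : M)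
    (hc : ∀ j : Fin _, 2 ≤ j.val → j.val < p + 2 → f j = c)
    (hx : ∀ j : Fin _, p + 2 ≤ j.val → j.val < p + r + 2 → f j = x)
    (hy : ∀ j : Fin _, p + r + 2 ≤ j.val → f j = y) :
    ∑ j, f j = f 0 + f 1 + p • c + r • x + s • y := by
  rw [Fin.sum_univ_succ, Fin.sum_univ_succ, Fin.sum_univ_add, Fin.sum_univ_add]
  have hP : ∀ j : Fin p, f (Fin.castAdd s (Fin.castAdd r j)).succ.succ = c := fun j =>
    hc _ (by simp) (by simp)
  have hR : ∀ j : Fin r, f (Fin.castAdd s (Fin.natAdd p j)).succ.succ = x := fun j =>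
    hx _ (by simp) (by simp)
  have hS : ∀ j : Fin s, f (Fin.natAdd (p + r) j).succ.succ = y := fun j =>
    hy _ (by simp)
  simp only [hP, hR, hS, Finset.sum_const, Finset.card_univ, Fintype.card_fin]
  rw [Fin.succ_zero_eq_one]
  abel

theorem adj_iff (a b : Fin (p + r + s + 2)) :
    (GGraph p r s).Adj a b ↔
      ((a.val = 0 ∧ b.val = 1) ∨ (b.val = 0 ∧ a.val = 1)) ∨
      (((a.val = 0 ∧ 2 ≤ b.val ∧ b.val < p + r + 2) ∨
        (a.val = 1 ∧ 2 ≤ b.val ∧ (b.val < p + 2 ∨ p + r + 2 ≤ b.val))) ∨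
       ((b.val = 0 ∧ 2 ≤ a.val ∧ a.val < p + r + 2) ∨
        (b.val = 1 ∧ 2 ≤ a.val ∧ (a.val < p + 2 ∨ p + r + 2 ≤ a.val)))) :=
  Iff.rfl

theorem sum_ite_adj (v : Fin (p + r + s + 2)) (f : Fin (p + r + s + 2) → M) (c x y : M)
    (hc : ∀ j : Fin _, 2 ≤ j.val → j.val < p + 2 → f j = c)
    (hx : ∀ j : Fin _, p + 2 ≤ j.val → j.val < p + r + 2 → f j = x)
    (hy : ∀ j : Fin _, p + r + 2 ≤ j.val → f j = y) :
    ∑ j, (if (GGraph p r s).Adj v j then f j else 0) =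
      if v.val = 0 then f 1 + p • c + r • x
      else if v.val = 1 then f 0 + p • c + s • y
      else if v.val < p + 2 then f 0 + f 1
      else if v.val < p + r + 2 then f 0
      else f 1 := by
  rw [sum_eq_of_const_on_parts _ (if v.val = 0 ∨ v.val = 1 then c else 0)
    (if v.val = 0 then x else 0) (if v.val = 1 then y else 0)]
  · have h₀ : (GGraph p r s).Adj v 0 ↔ v.val = 1 ∨ (2 ≤ v.val ∧ v.val < p + r + 2) := by
      rw [adj_iff, Fin.val_zero]; omega
    have h₁ : (GGraph p r s).Adj v 1 ↔
        v.val = 0 ∨ (2 ≤ v.val ∧ v.val < p + 2) ∨ p + r + 2 ≤ v.val := by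
      rw [adj_iff, Fin.val_one]; omega
    simp only [h₀, h₁]
    split_ifs <;> first | omega | simp
  · intro j h₁ h₂
    simp only [adj_iff, hc j h₁ h₂]
    split_ifs <;> first | rfl | omega
  · intro j h₁ h₂
    simp only [adj_iff, hx j h₁ h₂]
    split_ifs <;> first | rfl | omega
  · intro j h₁
    simp only [adj_iff, hy j h₁]
    split_ifs <;> first | rfl | omega

theorem degree_eq (v : Fin (p + r + s + 2)) :
    (GGraph p r s).degree v =
      if v.val = 0 then p + r + 1
      else if v.val = 1 then p + s + 1
      else if v.val < p + 2 then 2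
      else 1 := by
  rw [← SimpleGraph.card_neighborFinset_eq_degree, SimpleGraph.neighborFinset_eq_filter,
    Finset.card_filter, sum_ite_adj v (fun _ => 1) 1 1 1 (fun _ _ _ => rfl) (fun _ _ _ => rfl)
    (fun _ _ => rfl)]
  simp only [smul_eq_mul, mul_one]
  split_ifs <;> omega

def blockVec (p r s : ℕ) (a b c x y : ℝ) : Fin (p + r + s + 2) → ℝ := fun i =>
  if i.val = 0 then a else if i.val = 1 then b else if i.val < p + 2 then c
  else if i.val < p + r + 2 then x else y

theorem blockVec_apply_P {a b c x y : ℝ} (j : Fin (p + r + s + 2)) (h₁ : 2 ≤ j.val)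
    (h₂ : j.val < p + 2) :
    blockVec p r s a b c x y j = c := by
  unfold blockVec; split_ifs <;> first | rfl | omega

theorem blockVec_apply_R {a b c x y : ℝ} (j : Fin (p + r + s + 2)) (h₁ : p + 2 ≤ j.val)
    (h₂ : j.val < p + r + 2) :
    blockVec p r s a b c x y j = x := by
  unfold blockVec; split_ifs <;> first | rfl | omega

theorem blockVec_apply_S {a b c x y : ℝ} (j : Fin (p + r + s + 2)) (h : p + r + 2 ≤ j.val) :
    blockVec p r s a b c x y j = y := by
  unfold blockVec; split_ifs <;> first | rfl | omega

theorem sLapMatrix_mulVec_blockVec (a b c x y : ℝ) :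
    sLapMatrix (GGraph p r s) *ᵥ blockVec p r s a b c x y =
      blockVec p r s ((p + r + 1) * a + b + p * c + r * x) ((p + s + 1) * b + a + p * c + s * y)
        (2 * c + a + b) (x + a) (y + b) := by
  ext v
  rw [sLapMatrix, add_mulVec, Pi.add_apply, SimpleGraph.degMatrix_mulVec_apply,
    SimpleGraph.adjMatrix_mulVec_apply, SimpleGraph.neighborFinset_eq_filter, Finset.sum_filter,
    sum_ite_adj v (blockVec p r s a b c x y) c x y blockVec_apply_P blockVec_apply_R
      blockVec_apply_S, degree_eq]
  simp only [blockVec, Fin.val_zero, Fin.val_one, nsmul_eq_mul, one_ne_zero, ↓reduceIte]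
  split_ifs <;> first | omega | (push_cast; ring)

theorem blockVec_dotProduct_blockVec (a b c x y a' b' c' x' y' : ℝ) :
    blockVec p r s a b c x y ⬝ᵥ blockVec p r s a' b' c' x' y' =
      a * a' + b * b' + p * (c * c') + r * (x * x') + s * (y * y') := by
  rw [dotProduct, sum_eq_of_const_on_parts _ (c * c') (x * x') (y * y')
    (fun j h₁ h₂ => by simp only [blockVec_apply_P j h₁ h₂])
    (fun j h₁ h₂ => by simp only [blockVec_apply_R j h₁ h₂])
    (fun j h => by simp only [blockVec_apply_S j h])]
  simp [blockVec, nsmul_eq_mul]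

theorem smul_blockVec (μ a b c x y : ℝ) :
    μ • blockVec p r s a b c x y = blockVec p r s (μ * a) (μ * b) (μ * c) (μ * x) (μ * y) := by
  ext i
  simp only [Pi.smul_apply, smul_eq_mul, blockVec]
  split_ifs <;> rfl

theorem sLapMatrix_mulVec_antisymm {μ : ℝ} (hμ : μ ^ 2 = (p + r + 1) * μ - p) :
    sLapMatrix (GGraph p r r) *ᵥ blockVec p r r (μ - 1) (1 - μ) 0 1 (-1) =
      μ • blockVec p r r (μ - 1) (1 - μ) 0 1 (-1) := by
  rw [sLapMatrix_mulVec_blockVec, smul_blockVec]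
  congr 1
  · linear_combination -hμ
  · linear_combination hμ
  all_goals ring

theorem add_seven_halves_lt_first_eigenvalue {q : Fin (1 + r + r + 2) → ℝ}
    (hq : IsEigSeq (sLapMatrix (GGraph 1 r r)) q) : (r : ℝ) + 7 / 2 < q ⟨0, by omega⟩ := by
  have h := hq.dotProduct_mulVec_le (by omega) (blockVec 1 r r (2 * r + 1) (2 * r + 1) 2 1 1)
  rw [sLapMatrix_mulVec_blockVec, blockVec_dotProduct_blockVec, blockVec_dotProduct_blockVec] at h
  push_cast at h
  -- `xᵀQx = 8r³ + 40r² + 48r + 22` while `(r + 7/2) xᵀx = 8r³ + 38r² + 41r + 21`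
  nlinarith

end GGraph

theorem GGraph_one_r_r_bounds {r : ℕ} (hr : 1 ≤ r)
    (q : Fin (1 + r + r + 2) → ℝ) (hq : IsEigSeq (sLapMatrix (GGraph 1 r r)) q)
    (d : Fin (1 + r + r + 2) → ℕ) (hd : IsDegSeq (GGraph 1 r r) d) :
    q ⟨0, by omega⟩ > (d ⟨0, by omega⟩ : ℝ) + 3 / 2 ∧
    q ⟨1, by omega⟩ > (d ⟨1, by omega⟩ : ℝ) - 1 / 2 := by
  have hΔ : (GGraph 1 r r).maxDegree ≤ r + 2 :=
    SimpleGraph.maxDegree_le_of_forall_degree_le _ _ fun v => by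
      rw [GGraph.degree_eq]; split_ifs <;> omega
  have hd' : ∀ i, (d i : ℝ) ≤ r + 2 := fun i => by exact_mod_cast (hd.le_maxDegree i).trans hΔ
  have hq₀ := GGraph.add_seven_halves_lt_first_eigenvalue hq
  have hr' : (1 : ℝ) ≤ r := by exact_mod_cast hr
  obtain ⟨μ, ⟨hμ_lo, hμ_hi⟩, hμ⟩ := exists_sq_eq_mul_sub_one_mem_Ioo (t := r) (by linarith)
  have hw : GGraph.blockVec 1 r r (μ - 1) (1 - μ) 0 1 (-1) ≠ 0 := fun h => by
    have := congrFun h 0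
    simp only [GGraph.blockVec, Fin.coe_ofNat_eq_mod, Nat.zero_mod, ↓reduceIte,
      Pi.zero_apply] at this
    linarith
  have hq₁ : μ ≤ q ⟨1, by omega⟩ :=
    hq.le_second_of_mulVec_eq_smul (by omega) hw
      (GGraph.sLapMatrix_mulVec_antisymm (by push_cast; linear_combination hμ)) (by linarith)
  constructor <;> linarith [hd' ⟨0, by omega⟩, hd' ⟨1, by omega⟩]
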